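/- arXiv:1708.05290 — 2 statements merged into one kernel-verified Lean document; each statement's English description precedes it below -/
import Mathlib

section
/- Let G be a simple graph in which every maximal clique is finite with exactly N vertices. If λ : G → G is an edge-preserving map and K is a maximal clique of G, then λ(K) is contained in some maximal clique of G, and since λ is injective on K, λ(K) is itself a maximal clique of G. -/
/-- A vertex map is edge-preserving if it maps adjacent vertices to adjacent vertices. -/
def EdgePreserving {V : Type*} (G : SimpleGraph V) (f : V → V) : Prop :=
  ∀ u v : V, G.Adj u v → G.Adj (f u) (f v)

/-- A maximal clique: a clique contained in no strictly larger clique. -/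
def IsMaxClique {V : Type*} (G : SimpleGraph V) (K : Set V) : Prop :=
  G.IsClique K ∧ ∀ K' : Set V, G.IsClique K' → K ⊆ K' → K' = K

/-! An edge-preserving map sends adjacent vertices to distinct vertices, so it is injective on a
clique `K` and maps it onto a clique of the same size. By Zorn that clique lies in a maximal
clique `M`; as both `K` and `M` have exactly `N` vertices, `λ(K) = M`. -/

section

variable {V : Type*} {G : SimpleGraph V}

theorem isMaxClique_iff_maximal {K : Set V} : IsMaxClique G K ↔ Maximal G.IsClique K := by
  rw [SimpleGraph.isMaximalClique_iff]
  refine and_congr_right fun _ => forall₃_congr fun K' _ hKK' => ?_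
  exact ⟨fun h => h.le, fun h => h.antisymm hKK'⟩

theorem SimpleGraph.IsClique.exists_isMaxClique_superset {C : Set V} (hC : G.IsClique C) :
    ∃ M : Set V, IsMaxClique G M ∧ C ⊆ M := by
  obtain ⟨M, hCM, hM⟩ := zorn_subset_nonempty {s | G.IsClique s}
    (fun c hc hchain _ => ⟨⋃₀ c, (G.isClique_sUnion hchain.directedOn).2 hc,
      fun _ => Set.subset_sUnion_of_mem⟩) C hC
  exact ⟨M, isMaxClique_iff_maximal.2 hM, hCM⟩

namespace EdgePreserving

variable {f : V → V} {K : Set V}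

theorem isClique_image (hf : EdgePreserving G f) (hK : G.IsClique K) : G.IsClique (f '' K) := by
  rintro _ ⟨u, hu, rfl⟩ _ ⟨v, hv, rfl⟩ hne
  exact hf u v (hK hu hv (ne_of_apply_ne f hne))

theorem injOn_of_isClique (hf : EdgePreserving G f) (hK : G.IsClique K) : Set.InjOn f K :=
  fun u hu v hv huv => by_contra fun hne => (hf u v (hK hu hv hne)).ne huv

end EdgePreserving

end

/-- If every maximal clique of `G` is finite with exactly `N` vertices and `λ` is
edge-preserving, then the image of a maximal clique is contained in a maximal clique,
and is itself a maximal clique. -/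
theorem edgePreserving_image_maxClique {V : Type*} (G : SimpleGraph V) (N : ℕ)
    (hN : ∀ K : Set V, IsMaxClique G K → K.Finite ∧ K.ncard = N)
    (l : V → V) (hl : EdgePreserving G l) (K : Set V) (hK : IsMaxClique G K) :
    (∃ M : Set V, IsMaxClique G M ∧ l '' K ⊆ M) ∧ IsMaxClique G (l '' K) := by
  obtain ⟨M, hM, hKM⟩ := (hl.isClique_image hK.1).exists_isMaxClique_superset
  have hcard : (l '' K).ncard = M.ncard := by
    rw [(hl.injOn_of_isClique hK.1).ncard_image, (hN K hK).2, (hN M hM).2]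
  have himage_eq : l '' K = M := Set.eq_of_subset_of_ncard_le hKM hcard.ge (hN M hM).1
  exact ⟨⟨M, hM, hKM⟩, himage_eq ▸ hM⟩
end

section
/- Let S be a group acting on a set V, let λ : V → V be a map, let h ∈ S, and let G be a generating set of a group Γ ≤ S acting on V. Suppose X₁ ⊆ V satisfies: λ(x) = h·x for all x ∈ X₁; and for each f ∈ G there is a subset L_f ⊆ X₁ with λ(x) = h·x for all x ∈ L_f ∪ f·L_f, such that the pointwise stabilizer of L_f in S is trivial and the pointwise stabilizer of f·L_f in S is trivial. Further suppose: for each k ≥ 2, defining X_k = X_{k−1} ∪ ⋃_{f∈G} (f·X_{k−1} ∪ f⁻¹·X_{k−1}), for every f ∈ G and k there exist elements h_f, h'_f ∈ S with λ(x) = h_f·x for all x ∈ f·X_{k−1} and λ(x) = h'_f·x for all x ∈ f⁻¹·X_{k−1}. Then λ(x) = h·x for all x ∈ ⋃_{k≥1} X_k. -/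
open Pointwise

/-!
The sets `X k` increase with `k`. For `x ∈ f • X (k - 1)`, `λ` is induced by some `h_f` on
`f • X k`, which contains both `x` and `f • L_f`; since `λ` is also induced by `h` on `f • L_f`,
whose pointwise stabilizer is trivial, `h_f = h`. The case `x ∈ f⁻¹ • X (k - 1)` is symmetric,
using `L_f ⊆ f⁻¹ • X k` (because `f • L_f ⊆ X 2`).
-/

section Rigidity

variable {S V : Type*} [Group S] [MulAction S V]

theorem eq_of_smul_eq_of_fixing_trivial {A : Set V}
    (hA : ∀ s : S, (∀ a ∈ A, s • a = a) → s = 1) {g g' : S}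
    (hgg' : ∀ a ∈ A, g • a = g' • a) : g = g' :=
  inv_mul_eq_one.mp <| hA _ fun a ha => by rw [mul_smul, ← hgg' a ha, inv_smul_smul]

theorem agree_of_agree_on_subset_of_fixing_trivial {l : V → V} {A B : Set V}
    (hA : ∀ s : S, (∀ a ∈ A, s • a = a) → s = 1) (hAB : A ⊆ B) {g g' : S}
    (hg : ∀ x ∈ A, l x = g • x) (hg' : ∀ x ∈ B, l x = g' • x) :
    ∀ x ∈ B, l x = g • x := by
  have : g' = g := eq_of_smul_eq_of_fixing_trivial hA fun a ha => by
    rw [← hg' a (hAB ha), hg a ha]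
  simpa [this] using hg'

end Rigidity

section Exhaustion

variable {S V : Type*} [Group S] [MulAction S V] {G : Set S} {X : ℕ → Set V}

theorem succ_eq_union_smul
    (hrec : ∀ k : ℕ, 2 ≤ k →
      X k = X (k - 1) ∪ ⋃ f ∈ G, ((f • X (k - 1)) ∪ (f⁻¹ • X (k - 1)))) (k : ℕ) :
    X (k + 2) = X (k + 1) ∪ ⋃ f ∈ G, ((f • X (k + 1)) ∪ (f⁻¹ • X (k + 1))) :=
  hrec (k + 2) (by omega)

theorem monotone_succ
    (hrec : ∀ k : ℕ, 2 ≤ k →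
      X k = X (k - 1) ∪ ⋃ f ∈ G, ((f • X (k - 1)) ∪ (f⁻¹ • X (k - 1)))) :
    Monotone fun k => X (k + 1) :=
  monotone_nat_of_le_succ fun k => by
    rw [succ_eq_union_smul hrec k]
    exact Set.subset_union_left

theorem smul_one_subset_two
    (hrec : ∀ k : ℕ, 2 ≤ k →
      X k = X (k - 1) ∪ ⋃ f ∈ G, ((f • X (k - 1)) ∪ (f⁻¹ • X (k - 1)))) {f : S} (hf : f ∈ G) :
    f • X 1 ⊆ X 2 := by
  intro y hy
  rw [succ_eq_union_smul hrec 0]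
  exact .inr (Set.mem_biUnion hf (.inl hy))

end Exhaustion

theorem agreement_propagates_general {S V : Type*} [Group S] [MulAction S V]
    (G : Set S)
    (l : V → V) (h : S)
    (X : ℕ → Set V)
    (hbase : ∀ x ∈ X 1, l x = h • x)
    (hrec : ∀ k : ℕ, 2 ≤ k →
      X k = X (k - 1) ∪ ⋃ f ∈ G, ((f • X (k - 1)) ∪ (f⁻¹ • X (k - 1))))
    (hL : ∀ f ∈ G, ∃ L : Set V, L ⊆ X 1 ∧
      (∀ x ∈ L ∪ f • L, l x = h • x) ∧
      (∀ s : S, (∀ a ∈ L, s • a = a) → s = 1) ∧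
      (∀ s : S, (∀ a ∈ f • L, s • a = a) → s = 1))
    (hstep : ∀ f ∈ G, ∀ k : ℕ, 1 ≤ k →
      (∃ hf : S, ∀ x ∈ f • X k, l x = hf • x) ∧
      (∃ hf' : S, ∀ x ∈ f⁻¹ • X k, l x = hf' • x)) :
    ∀ x ∈ ⋃ k : ℕ, X (k + 1), l x = h • x := by
  have mono := monotone_succ hrec
  simp_rw [Set.mem_iUnion]
  rintro x ⟨k, hx⟩
  induction k generalizing x with
  | zero => exact hbase x hx
  | succ n ih =>
    rw [succ_eq_union_smul hrec] at hx
    obtain hx | hx := hx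
    · exact ih x hx
    obtain ⟨f, hf, hx | hx⟩ : ∃ f ∈ G, x ∈ f • X (n + 1) ∨ x ∈ f⁻¹ • X (n + 1) := by
      simpa using hx
    all_goals
      obtain ⟨L, hL1, hLl, hLfix, hfLfix⟩ := hL f hf
      obtain ⟨⟨g, hg⟩, ⟨g', hg'⟩⟩ := hstep f hf (n + 2) (by omega)
      have hLX : L ⊆ X (n + 2) := hL1.trans (mono (Nat.zero_le (n + 1)))
      have hfLX : f • L ⊆ X (n + 2) :=
        ((Set.smul_set_mono hL1).trans (smul_one_subset_two hrec hf)).trans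
          (mono (Nat.le_add_left 1 n))
    · exact agree_of_agree_on_subset_of_fixing_trivial hfLfix (Set.smul_set_mono hLX)
        (fun y hy => hLl y (.inr hy)) hg x (Set.smul_set_mono (mono n.le_succ) hx)
    · exact agree_of_agree_on_subset_of_fixing_trivial hLfix
        (Set.smul_set_subset_iff_subset_inv_smul_set.mp hfLX)
        (fun y hy => hLl y (.inl hy)) hg' x (Set.smul_set_mono (mono n.le_succ) hx)

/-- The inductive propagation argument of Theorem 2.16: if `λ` agrees with `h` on `X₁`,
agreement propagates via sets `L_f` with trivial pointwise stabilizers, and on each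
translate `f • X_{k-1}`, `f⁻¹ • X_{k-1}` the map `λ` is induced by some group element,
then `λ` agrees with `h` on all of `⋃_{k ≥ 1} X_k`. -/
theorem agreement_propagates {S V : Type*} [Group S] [MulAction S V]
    (Γ : Subgroup S) (G : Set S) (hGΓ : Subgroup.closure G = Γ)
    (l : V → V) (h : S)
    (X : ℕ → Set V)
    (hbase : ∀ x ∈ X 1, l x = h • x)
    (hrec : ∀ k : ℕ, 2 ≤ k →
      X k = X (k - 1) ∪ ⋃ f ∈ G, ((f • X (k - 1)) ∪ (f⁻¹ • X (k - 1))))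
    (hL : ∀ f ∈ G, ∃ L : Set V, L ⊆ X 1 ∧
      (∀ x ∈ L ∪ f • L, l x = h • x) ∧
      (∀ s : S, (∀ a ∈ L, s • a = a) → s = 1) ∧
      (∀ s : S, (∀ a ∈ f • L, s • a = a) → s = 1))
    (hstep : ∀ f ∈ G, ∀ k : ℕ, 1 ≤ k →
      (∃ hf : S, ∀ x ∈ f • X k, l x = hf • x) ∧
      (∃ hf' : S, ∀ x ∈ f⁻¹ • X k, l x = hf' • x)) :
    ∀ x ∈ ⋃ k : ℕ, X (k + 1), l x = h • x :=
  agreement_propagates_general G l h X hbase hrec hL hstep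
end
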